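/- arXiv:1503.01375 — 6 statements merged into one kernel-verified Lean document; each statement's English description precedes it below -/
import Mathlib

section
/- Let m ≥ 2, let x₁,…,x_p ∈ ℝⁿ be orthonormal, let λ₁,…,λ_p be nonzero reals, and let A = Σ_{k=1}^p λ_k x_k^m. Let β : (Fin (m−2) → Fin n) → ℝ be given and let B be the slice combination of A with coefficients β. Set σ_k = λ_k · Σ_{i₃,…,i_m} β_{i₃⋯i_m} (x_k)_{i₃}⋯(x_k)_{i_m} for k = 1,…,p, and suppose the σ_k are nonzero and pairwise distinct. If v₁,…,v_p ∈ ℝⁿ are orthonormal vectors satisfying B v_j = τ_j v_j with τ_j ≠ 0 for each j, then A = Σ_{j=1}^p (A v_j^m) v_j^m. (Correctness of the eigendecomposition-based orthogonal symmetric tensor decomposition algorithm.) -/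
/-- Let `m ≥ 2` (here the order is written as `m + 2`), let `x₁, …, x_p ∈ ℝⁿ`
be orthonormal, let `λ₁, …, λ_p` be nonzero reals, and let `A = ∑_{k=1}^p λ_k x_k^{m+2}`.
Let `β` be given coefficients and let `B` be the slice combination of `A` with coefficients `β`.
Set `σ_k = λ_k ⬝ ∑_{i₃,…} β_{i₃⋯} (x_k)_{i₃} ⋯`, and suppose the `σ_k` are nonzero and pairwise
distinct.  If `v₁, …, v_p ∈ ℝⁿ` are orthonormal with `B v_j = τ_j v_j` and `τ_j ≠ 0` for each
`j`, then `A = ∑_{j=1}^p (A v_j^{m+2}) v_j^{m+2}`. -/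
theorem orthogonal_decomposition_algorithm_correct {m n p : ℕ}
    (x : Fin p → Fin n → ℝ)
    (hx : ∀ j k, (∑ i, x j i * x k i) = if j = k then (1 : ℝ) else 0)
    (lam : Fin p → ℝ) (hlam : ∀ k, lam k ≠ 0)
    (A : (Fin (m + 2) → Fin n) → ℝ)
    (hA : A = fun i => ∑ k, lam k * ∏ l, x k (i l))
    (β : (Fin m → Fin n) → ℝ)
    (B : Matrix (Fin n) (Fin n) ℝ)
    (hB : ∀ i₁ i₂, B i₁ i₂ =
      ∑ rest : Fin m → Fin n, β rest * A (Fin.cons i₁ (Fin.cons i₂ rest)))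
    (σ : Fin p → ℝ)
    (hσ : ∀ k, σ k = lam k * ∑ rest : Fin m → Fin n, β rest * ∏ l, x k (rest l))
    (hσne : ∀ k, σ k ≠ 0)
    (hσdist : Function.Injective σ)
    (v : Fin p → Fin n → ℝ)
    (hv : ∀ j k, (∑ i, v j i * v k i) = if j = k then (1 : ℝ) else 0)
    (τ : Fin p → ℝ) (hτ : ∀ j, τ j ≠ 0)
    (heig : ∀ j, B.mulVec (v j) = τ j • v j) :
    A = fun i => ∑ j,
      (∑ idx : Fin (m + 2) → Fin n, A idx * ∏ l, v j (idx l)) * ∏ l, v j (i l) := by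
  classical
  set c : Fin p → Fin p → ℝ := fun j k => ∑ i, x k i * v j i with hcdef
  clear_value c
  have hc : ∀ j k, c j k = ∑ i, x k i * v j i := fun j k => by rw [hcdef]
  clear hcdef
  -- sum-prod exchange
  have key : ∀ (M : ℕ) (h : Fin M → Fin n → ℝ),
      (∑ idx : Fin M → Fin n, ∏ l, h l (idx l)) = ∏ l, ∑ i, h l i := by
    intro M h
    rw [Finset.prod_univ_sum, Fintype.piFinset_univ]
  -- value of A on rank-one tensors
  have hAval : ∀ w : Fin n → ℝ,
      (∑ idx : Fin (m+2) → Fin n, A idx * ∏ l, w (idx l))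
        = ∑ k, lam k * (∑ i, x k i * w i) ^ (m + 2) := by
    intro w
    have h0 : ∀ idx : Fin (m+2) → Fin n,
        A idx * ∏ l, w (idx l) = ∑ k, lam k * ∏ l, x k (idx l) * w (idx l) := by
      intro idx
      rw [hA]
      rw [Finset.sum_mul]
      refine Finset.sum_congr rfl fun k _ => ?_
      rw [Finset.prod_mul_distrib, mul_assoc]
    simp only [h0]
    rw [Finset.sum_comm]
    refine Finset.sum_congr rfl fun k _ => ?_
    rw [← Finset.mul_sum, key (m+2) (fun l i => x k i * w i)]
    simp [pow_succ]
  -- B as a sum of rank-one matrices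
  have hB' : ∀ i₁ i₂, B i₁ i₂ = ∑ k, σ k * (x k i₁ * x k i₂) := by
    intro i₁ i₂
    rw [hB]
    have h1 : ∀ rest : Fin m → Fin n,
        β rest * A (Fin.cons i₁ (Fin.cons i₂ rest))
          = ∑ k, β rest * (lam k * (x k i₁ * (x k i₂ * ∏ l, x k (rest l)))) := by
      intro rest
      rw [hA, Finset.mul_sum]
      refine Finset.sum_congr rfl fun k _ => ?_
      congr 1
      congr 1
      simp only [← Function.comp_apply (f := x k), Fin.comp_cons, Fin.prod_cons]
    simp only [h1]
    rw [Finset.sum_comm]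
    refine Finset.sum_congr rfl fun k _ => ?_
    rw [hσ, Finset.mul_sum, Finset.sum_mul]
    refine Finset.sum_congr rfl fun rest _ => ?_
    ring
  -- eigen equation in coordinates
  have hE : ∀ j i, τ j * v j i = ∑ k, σ k * c j k * x k i := by
    intro j i
    have h1 := congrFun (heig j) i
    simp only [Matrix.mulVec, dotProduct, Pi.smul_apply, smul_eq_mul] at h1
    rw [← h1]
    have h2 : ∀ i₂, B i i₂ * v j i₂ = ∑ k, σ k * (x k i * x k i₂) * v j i₂ := by
      intro i₂; rw [hB' i i₂, Finset.sum_mul]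
    simp only [h2]
    rw [Finset.sum_comm]
    refine Finset.sum_congr rfl fun k _ => ?_
    rw [mul_right_comm, hc, Finset.mul_sum]
    refine Finset.sum_congr rfl fun i₂ _ => ?_
    ring
  -- eigenvalue relation for the coefficients c
  have hF : ∀ j k, τ j * c j k = σ k * c j k := by
    intro j k
    have h1 : τ j * c j k = ∑ k', σ k' * c j k' * ∑ i, x k i * x k' i := by
      calc τ j * c j k = ∑ i, x k i * (τ j * v j i) := by
            rw [hc, Finset.mul_sum]
            exact Finset.sum_congr rfl fun i _ => by ring
        _ = ∑ i, x k i * ∑ k', σ k' * c j k' * x k' i := by simp only [hE]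
        _ = ∑ i, ∑ k', x k i * (σ k' * c j k' * x k' i) := by
            simp only [Finset.mul_sum]
        _ = ∑ k', ∑ i, x k i * (σ k' * c j k' * x k' i) := by rw [Finset.sum_comm]
        _ = ∑ k', σ k' * c j k' * ∑ i, x k i * x k' i := by
            refine Finset.sum_congr rfl fun k' _ => ?_
            rw [Finset.mul_sum]
            exact Finset.sum_congr rfl fun i _ => by ring
    rw [h1]
    simp only [hx, mul_ite, mul_one, mul_zero]
    simp [Finset.sum_ite_eq]
  have hvv : ∀ j, (∑ i, v j i * v j i) = 1 := fun j => by simpa using hv j j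
  -- each v j has a nonzero component along some x k
  have hex : ∀ j, ∃ k, c j k ≠ 0 := by
    intro j
    by_contra hcon
    push_neg at hcon
    have hz : ∀ i, v j i = 0 := by
      intro i
      have h := hE j i
      simp only [hcon, mul_zero, zero_mul, Finset.sum_const_zero] at h
      exact (mul_eq_zero.mp h).resolve_left (hτ j)
    have h := hvv j
    simp [hz] at h
  set π : Fin p → Fin p := fun j => (hex j).choose with hπdef
  have hπc : ∀ j, c j (π j) ≠ 0 := fun j => (hex j).choose_spec
  clear_value π
  clear hπdef
  have hτσ : ∀ j, τ j = σ (π j) := fun j => mul_right_cancel₀ (hπc j) (hF j (π j))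
  have hczero : ∀ j k, k ≠ π j → c j k = 0 := by
    intro j k hne
    by_contra hc0
    have h := mul_right_cancel₀ hc0 (hF j k)
    rw [hτσ j] at h
    exact hne (hσdist h.symm)
  -- v j is proportional to x (π j)
  have hG : ∀ j i, v j i = c j (π j) * x (π j) i := by
    intro j i
    have h1 := hE j i
    have h2 : (∑ k, σ k * c j k * x k i) = σ (π j) * c j (π j) * x (π j) i := by
      refine Finset.sum_eq_single (π j) (fun k _ hk => ?_) (fun h => absurd (Finset.mem_univ _) h)
      rw [hczero j k hk]; ring
    rw [h2, ← hτσ j] at h1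
    have h3 : τ j * v j i = τ j * (c j (π j) * x (π j) i) := by rw [h1]; ring
    exact mul_left_cancel₀ (hτ j) h3
  have he1 : ∀ j, c j (π j) * c j (π j) = 1 := by
    intro j
    have h := hvv j
    simp only [hG] at h
    have h2 : (∑ i, c j (π j) * x (π j) i * (c j (π j) * x (π j) i))
        = c j (π j) * c j (π j) * ∑ i, x (π j) i * x (π j) i := by
      rw [Finset.mul_sum]
      exact Finset.sum_congr rfl fun i _ => by ring
    rw [h2, hx, if_pos rfl, mul_one] at h
    exact h
  -- π is injective, hence bijective
  have hπinj : Function.Injective π := by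
    intro j j' hjj
    by_contra hne
    have h0 := hv j j'
    rw [if_neg hne] at h0
    simp only [hG, hjj] at h0
    have h2 : (∑ i, c j (π j') * x (π j') i * (c j' (π j') * x (π j') i))
        = c j (π j') * c j' (π j') * ∑ i, x (π j') i * x (π j') i := by
      rw [Finset.mul_sum]
      exact Finset.sum_congr rfl fun i _ => by ring
    rw [h2, hx, if_pos rfl, mul_one] at h0
    have hcne : c j (π j') ≠ 0 := by rw [← hjj]; exact hπc j
    exact (mul_ne_zero hcne (hπc j')) h0
  have hπbij : Function.Bijective π := (Finite.injective_iff_bijective).mp hπinj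
  -- final computation
  funext i
  have hterm : ∀ j,
      (∑ idx : Fin (m + 2) → Fin n, A idx * ∏ l, v j (idx l)) * ∏ l, v j (i l)
        = lam (π j) * ∏ l, x (π j) (i l) := by
    intro j
    rw [hAval (v j)]
    have h1 : (∑ k, lam k * (∑ i', x k i' * v j i') ^ (m + 2))
        = lam (π j) * c j (π j) ^ (m + 2) := by
      simp only [← hc]
      refine Finset.sum_eq_single (π j) (fun k _ hk => ?_) (fun h => absurd (Finset.mem_univ _) h)
      rw [hczero j k hk]
      simp
    rw [h1]
    have h2 : (∏ l, v j (i l)) = c j (π j) ^ (m + 2) * ∏ l, x (π j) (i l) := by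
      simp only [hG]
      rw [Finset.prod_mul_distrib, Finset.prod_const]
      simp
    rw [h2]
    have h3 : c j (π j) ^ (m + 2) * c j (π j) ^ (m + 2) = 1 := by
      rw [← mul_pow, he1 j, one_pow]
    calc lam (π j) * c j (π j) ^ (m + 2) * (c j (π j) ^ (m + 2) * ∏ l, x (π j) (i l))
        = lam (π j) * ((c j (π j) ^ (m + 2) * c j (π j) ^ (m + 2)) * ∏ l, x (π j) (i l)) := by
          ring
      _ = lam (π j) * ∏ l, x (π j) (i l) := by rw [h3, one_mul]
  simp only [hterm]
  rw [hA]
  exact (Fintype.sum_bijective π hπbij _ _ (fun j => rfl)).symm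
end

section
/- Let m ≥ 2, let λ₁,…,λ_p be reals, let x₁,…,x_p ∈ ℝⁿ be linearly independent (so that the n×p matrix X = [x₁ ⋯ x_p] has full column rank), and let A = Σ_{k=1}^p λ_k x_k^m. Let γ : (Fin (m−2) → Fin n) → ℝ be given and let C be the slice combination of A with coefficients γ. Suppose C is positive semidefinite with matrix rank p, and let W be a p×n real matrix satisfying W C Wᵀ = I_p. Then the vectors W x₁, …, W x_p ∈ ℝ^p are nonzero and pairwise orthogonal, and the transformed tensor satisfies A(W,…,W) = Σ_{k=1}^p λ_k (W x_k)^m. (Whitening converts a full-column-rank symmetric decomposition into an orthogonal one.) -/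
open Matrix

/-- Let `m ≥ 2` (here the order is written as `m + 2`), let `λ₁, …, λ_p` be
reals, let `x₁, …, x_p ∈ ℝⁿ` be linearly independent, and let `A = ∑_{k=1}^p λ_k x_k^{m+2}`.
Let `γ` be given coefficients and let `C` be the slice combination of `A` with coefficients `γ`.
Suppose `C` is positive semidefinite of rank `p`, and let `W` be a `p × n` matrix with
`W C Wᵀ = I_p`.  Then the vectors `W x₁, …, W x_p ∈ ℝ^p` are nonzero and pairwise orthogonal,
and `A(W, …, W) = ∑_{k=1}^p λ_k (W x_k)^{m+2}`. -/
theorem whitening_orthogonalizes {m n p : ℕ}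
    (lam : Fin p → ℝ)
    (x : Fin p → Fin n → ℝ) (hx : LinearIndependent ℝ x)
    (A : (Fin (m + 2) → Fin n) → ℝ)
    (hA : A = fun i => ∑ k, lam k * ∏ l, x k (i l))
    (γ : (Fin m → Fin n) → ℝ)
    (C : Matrix (Fin n) (Fin n) ℝ)
    (hC : ∀ i₁ i₂, C i₁ i₂ =
      ∑ rest : Fin m → Fin n, γ rest * A (Fin.cons i₁ (Fin.cons i₂ rest)))
    (hpsd : C.PosSemidef) (hrank : C.rank = p)
    (W : Matrix (Fin p) (Fin n) ℝ)
    (hW : W * C * Wᵀ = 1) :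
    (∀ k, W.mulVec (x k) ≠ 0) ∧
    (∀ j k, j ≠ k → (∑ i, W.mulVec (x j) i * W.mulVec (x k) i) = 0) ∧
    (∀ i : Fin (m + 2) → Fin p,
      (∑ jj : Fin (m + 2) → Fin n, A jj * ∏ l, W (i l) (jj l)) =
        ∑ k, lam k * ∏ l, W.mulVec (x k) (i l)) := by
  classical
  set μ : Fin p → ℝ :=
    fun k => lam k * ∑ rest : Fin m → Fin n, γ rest * ∏ l, x k (rest l) with hμ
  set X : Matrix (Fin n) (Fin p) ℝ := Matrix.of fun i k => x k i with hXdef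
  -- C = X * diagonal μ * Xᵀ
  have hCX : C = X * Matrix.diagonal μ * Xᵀ := by
    ext i₁ i₂
    rw [hC]
    have hR : (X * Matrix.diagonal μ * Xᵀ) i₁ i₂ = ∑ k, x k i₁ * μ k * x k i₂ := by
      simp [Matrix.mul_apply, Matrix.diagonal, Matrix.mul_assoc, Finset.sum_mul,
        Matrix.transpose_apply, hXdef, Finset.mul_sum, ite_mul, mul_ite]
    rw [hR]
    simp only [hA, Fin.prod_cons, Finset.mul_sum]
    rw [Finset.sum_comm]
    refine Finset.sum_congr rfl fun k _ => ?_
    simp only [hμ, Finset.mul_sum, Finset.sum_mul]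
    refine Finset.sum_congr rfl fun rest _ => ?_
    rw [Fin.prod_univ_succ, Fin.prod_univ_succ]
    simp only [Fin.cons_succ, Fin.cons_zero]
    ring
  set Y : Matrix (Fin p) (Fin p) ℝ := W * X with hYdef
  have hYe : ∀ i j, Y i j = W.mulVec (x j) i := by
    intro i j
    simp [hYdef, Matrix.mul_apply, Matrix.mulVec, dotProduct, hXdef]
  have hY1 : Y * (Matrix.diagonal μ * Yᵀ) = 1 := by
    rw [← hW, hCX]
    simp only [hYdef, Matrix.transpose_mul, Matrix.mul_assoc]
  have h2 : Matrix.diagonal μ * (Yᵀ * Y) = 1 := by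
    have := mul_eq_one_comm.mp hY1
    rwa [Matrix.mul_assoc] at this
  have h3 : Yᵀ * Y * Matrix.diagonal μ = 1 := mul_eq_one_comm.mp h2
  have hentry : ∀ j k, (∑ i, W.mulVec (x j) i * W.mulVec (x k) i) * μ k
      = (1 : Matrix (Fin p) (Fin p) ℝ) j k := by
    intro j k
    rw [← h3, Matrix.mul_diagonal]
    simp [Matrix.mul_apply, Matrix.transpose_apply, hYe]
  have hμne : ∀ k, μ k ≠ 0 := by
    intro k hk
    have := hentry k k
    simp [hk, Matrix.one_apply] at this
  refine ⟨?_, ?_, ?_⟩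
  · intro k hk
    have := hentry k k
    simp [hk, Matrix.one_apply] at this
  · intro j k hjk
    have h := hentry j k
    rw [Matrix.one_apply_ne hjk] at h
    exact (mul_eq_zero.mp h).resolve_right (hμne k)
  · intro i
    simp only [hA, Finset.sum_mul]
    rw [Finset.sum_comm]
    refine Finset.sum_congr rfl fun k _ => ?_
    have : ∀ l, W.mulVec (x k) (i l) = ∑ j, W (i l) j * x k j := by
      intro l; simp [Matrix.mulVec, dotProduct]
    simp only [this]
    rw [Fintype.prod_sum fun l j => W (i l) j * x k j, Finset.mul_sum]
    refine Finset.sum_congr rfl fun jj _ => ?_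
    rw [mul_assoc, ← Finset.prod_mul_distrib]
    exact congrArg _ (Finset.prod_congr rfl fun l _ => mul_comm _ _)
end

section
/- Let m ≥ 2, let x₁,…,x_p ∈ ℝⁿ be orthonormal, let λ ∈ ℝ^p, and let A = Σ_{k=1}^p λ_k x_k^m. Let β : (Fin (m−2) → Fin n) → ℝ be given, let B be the slice combination of A with coefficients β, and set σ_k = λ_k · Σ_{i₃,…,i_m} β_{i₃⋯i_m} (x_k)_{i₃}⋯(x_k)_{i_m}. Then for every k ∈ {1,…,p}, the pair (σ_k, x_k) is an eigenpair of the matrix B, i.e., B x_k = σ_k x_k. -/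
/-- Let `m ≥ 2` (here the order is written as `m + 2`), let `x₁, …, x_p ∈ ℝⁿ`
be orthonormal, let `λ ∈ ℝ^p`, and let `A = ∑_{k=1}^p λ_k x_k^{m+2}`.  Let `B` be the slice
combination of `A` with coefficients `β` and set `σ_k = λ_k ⬝ ∑ β_{i₃⋯} (x_k)_{i₃} ⋯`.
Then for every `k`, the pair `(σ_k, x_k)` is an eigenpair of `B`, i.e. `B x_k = σ_k x_k`. -/
theorem decomposition_vectors_are_matrix_eigenvectors {m n p : ℕ}
    (x : Fin p → Fin n → ℝ)
    (hx : ∀ j k, (∑ i, x j i * x k i) = if j = k then (1 : ℝ) else 0)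
    (lam : Fin p → ℝ)
    (A : (Fin (m + 2) → Fin n) → ℝ)
    (hA : A = fun i => ∑ k, lam k * ∏ l, x k (i l))
    (β : (Fin m → Fin n) → ℝ)
    (B : Matrix (Fin n) (Fin n) ℝ)
    (hB : ∀ i₁ i₂, B i₁ i₂ =
      ∑ rest : Fin m → Fin n, β rest * A (Fin.cons i₁ (Fin.cons i₂ rest)))
    (σ : Fin p → ℝ)
    (hσ : ∀ k, σ k = lam k * ∑ rest : Fin m → Fin n, β rest * ∏ l, x k (rest l)) :
    ∀ k : Fin p, B.mulVec (x k) = σ k • x k := by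
  intro k
  funext i₁
  have hprod : ∀ (j : Fin p) (i₂ : Fin n) (rest : Fin m → Fin n),
      (∏ l, x j ((Fin.cons i₁ (Fin.cons i₂ rest) : Fin (m+2) → Fin n) l))
        = x j i₁ * (x j i₂ * ∏ l, x j (rest l)) := by
    intro j i₂ rest
    rw [show (fun l => x j ((Fin.cons i₁ (Fin.cons i₂ rest) : Fin (m+2) → Fin n) l))
        = Fin.cons (x j i₁) (Fin.cons (x j i₂) (fun l => x j (rest l))) by
        funext l
        refine Fin.cases rfl (fun l' => ?_) l
        refine Fin.cases rfl (fun l'' => rfl) l']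
    rw [Fin.prod_cons, Fin.prod_cons]
  simp only [Matrix.mulVec, dotProduct, Pi.smul_apply, smul_eq_mul]
  calc ∑ i₂, B i₁ i₂ * x k i₂
      = ∑ i₂, ∑ rest : Fin m → Fin n, ∑ j,
          β rest * (lam j * (x j i₁ * (x j i₂ * ∏ l, x j (rest l)))) * x k i₂ := by
        refine Finset.sum_congr rfl fun i₂ _ => ?_
        rw [hB, hA, Finset.sum_mul]
        refine Finset.sum_congr rfl fun rest _ => ?_
        rw [Finset.mul_sum, Finset.sum_mul]
        refine Finset.sum_congr rfl fun j _ => ?_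
        rw [hprod]
    _ = ∑ rest : Fin m → Fin n, ∑ j,
          β rest * (lam j * (x j i₁ * ∏ l, x j (rest l))) * ∑ i₂, x j i₂ * x k i₂ := by
        rw [Finset.sum_comm]
        refine Finset.sum_congr rfl fun rest _ => ?_
        rw [Finset.sum_comm]
        refine Finset.sum_congr rfl fun j _ => ?_
        rw [Finset.mul_sum]
        refine Finset.sum_congr rfl fun i₂ _ => ?_
        ring
    _ = ∑ rest : Fin m → Fin n,
          β rest * (lam k * (x k i₁ * ∏ l, x k (rest l))) := by
        refine Finset.sum_congr rfl fun rest _ => ?_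
        rw [Finset.sum_eq_single k]
        · rw [hx, if_pos rfl, mul_one]
        · intro j _ hj; rw [hx, if_neg hj, mul_zero]
        · intro h; exact absurd (Finset.mem_univ k) h
    _ = σ k * x k i₁ := by
        rw [hσ, Finset.mul_sum, Finset.sum_mul]
        refine Finset.sum_congr rfl fun rest _ => ?_
        ring
end

section
/- Let m ≥ 2, let x₁,…,x_p ∈ ℝⁿ be orthonormal, let λ₁,…,λ_p be nonzero reals, and let A = Σ_{k=1}^p λ_k x_k^m. Then A cannot be written as a sum of fewer than p symmetric rank-one terms: for every q < p there do not exist μ ∈ ℝ^q and y₁,…,y_q ∈ ℝⁿ with A = Σ_{j=1}^q μ_j y_j^m. (Hence the symmetric tensor rank of A equals p.) -/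
open Finset

/-- Product of sums = sum over index tuples of products. -/
lemma prod_sum_swap' {m n : ℕ} (f : Fin m → Fin n → ℝ) :
    ∑ i : Fin m → Fin n, ∏ l, f l (i l) = ∏ l, ∑ s, f l s := by
  rw [Finset.prod_univ_sum, Fintype.piFinset_univ]

/-- Let `m ≥ 2`, let `x₁, …, x_p ∈ ℝⁿ` be orthonormal, let `λ₁, …, λ_p` be
nonzero reals, and let `A = ∑_{k=1}^p λ_k x_k^m`.  Then `A` cannot be written as a sum of
fewer than `p` symmetric rank-one terms. -/
theorem symmetric_rank_eq_p {m n p : ℕ} (hm : 2 ≤ m)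
    (x : Fin p → Fin n → ℝ)
    (hx : ∀ j k, (∑ i, x j i * x k i) = if j = k then (1 : ℝ) else 0)
    (lam : Fin p → ℝ) (hlam : ∀ k, lam k ≠ 0)
    (A : (Fin m → Fin n) → ℝ)
    (hA : A = fun i => ∑ k, lam k * ∏ l, x k (i l)) :
    ∀ q : ℕ, q < p →
      ¬ ∃ (μ : Fin q → ℝ) (y : Fin q → Fin n → ℝ),
          A = fun i => ∑ j, μ j * ∏ l, y j (i l) := by
  rintro q hq ⟨μ, y, hAy⟩
  have hm0 : 0 < m := by omega
  have hm1 : m - 1 ≠ 0 := by omega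
  -- Key contraction step
  have key : ∀ t : Fin p, ∀ e : Fin n,
      lam t * x t e = ∑ j, (μ j * (∑ i, y j i * x t i) ^ (m - 1)) * y j e := by
    intro t e
    set z0 : Fin m := ⟨0, hm0⟩ with hz0
    set Z : Fin m → Fin n → ℝ :=
      fun l s => if l = z0 then (if s = e then 1 else 0) else x t s with hZ
    have hcontract : ∀ v : Fin n → ℝ,
        ∑ i : Fin m → Fin n, (∏ l, v (i l)) * ∏ l, Z l (i l)
          = v e * (∑ s, v s * x t s) ^ (m - 1) := by
      intro v
      have h1 : ∑ i : Fin m → Fin n, (∏ l, v (i l)) * ∏ l, Z l (i l)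
          = ∏ l, ∑ s, v s * Z l s := by
        rw [← prod_sum_swap' (fun l s => v s * Z l s)]
        apply Finset.sum_congr rfl
        intro i _
        rw [← Finset.prod_mul_distrib]
      rw [h1]
      rw [← Finset.mul_prod_erase Finset.univ _ (Finset.mem_univ z0)]
      have hz : ∑ s, v s * Z z0 s = v e := by
        simp [hZ, mul_ite]
      rw [hz]
      congr 1
      have hrest : ∀ l ∈ Finset.univ.erase z0, (∑ s, v s * Z l s) = ∑ s, v s * x t s := by
        intro l hl
        have : l ≠ z0 := (Finset.mem_erase.mp hl).1
        simp [hZ, this]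
      rw [Finset.prod_congr rfl hrest, Finset.prod_const,
        Finset.card_erase_of_mem (Finset.mem_univ z0), Finset.card_univ, Fintype.card_fin]
    have hAB : (fun i => ∑ k, lam k * ∏ l, x k (i l))
        = (fun i : Fin m → Fin n => ∑ j, μ j * ∏ l, y j (i l)) := hA ▸ hAy
    have hC := congrArg
      (fun B : (Fin m → Fin n) → ℝ => ∑ i : Fin m → Fin n, B i * ∏ l, Z l (i l)) hAB
    simp only [Finset.sum_mul] at hC
    rw [Finset.sum_comm] at hC
    conv at hC => rhs; rw [Finset.sum_comm]
    have hL : ∀ k : Fin p,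
        ∑ i : Fin m → Fin n, lam k * (∏ l, x k (i l)) * ∏ l, Z l (i l)
          = lam k * (x k e * (∑ s, x k s * x t s) ^ (m - 1)) := by
      intro k
      rw [← hcontract (x k), Finset.mul_sum]
      apply Finset.sum_congr rfl
      intro i _; ring
    have hR : ∀ j : Fin q,
        ∑ i : Fin m → Fin n, μ j * (∏ l, y j (i l)) * ∏ l, Z l (i l)
          = μ j * (y j e * (∑ s, y j s * x t s) ^ (m - 1)) := by
      intro j
      rw [← hcontract (y j), Finset.mul_sum]
      apply Finset.sum_congr rfl
      intro i _; ring
    rw [Finset.sum_congr rfl (fun k _ => hL k), Finset.sum_congr rfl (fun j _ => hR j)] at hC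
    have hLcollapse : ∑ k, lam k * (x k e * (∑ s, x k s * x t s) ^ (m - 1))
        = lam t * x t e := by
      have : ∀ k : Fin p, lam k * (x k e * (∑ s, x k s * x t s) ^ (m - 1))
          = if k = t then lam t * x t e else 0 := by
        intro k
        rw [hx k t]
        by_cases h : k = t
        · subst h; simp
        · simp [h, zero_pow hm1]
      rw [Finset.sum_congr rfl (fun k _ => this k), Finset.sum_ite_eq' Finset.univ t
        (fun _ => lam t * x t e)]
      simp
    rw [hLcollapse] at hC
    rw [hC]
    apply Finset.sum_congr rfl
    intro j _; ring
  -- Each x t lies in the span of the y's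
  have hspan : ∀ t, x t ∈ Submodule.span ℝ (Set.range y) := by
    intro t
    have hrepr : x t = ∑ j, ((lam t)⁻¹ * (μ j * (∑ i, y j i * x t i) ^ (m - 1))) • y j := by
      funext e
      have hk := key t e
      rw [← inv_mul_cancel_left₀ (hlam t) (x t e), hk, Finset.mul_sum]
      simp only [Finset.sum_apply, Pi.smul_apply, smul_eq_mul]
      apply Finset.sum_congr rfl
      intro j _; ring
    rw [hrepr]
    exact Submodule.sum_mem _ fun j _ =>
      Submodule.smul_mem _ _ (Submodule.subset_span ⟨j, rfl⟩)
  -- Linear independence of the x's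
  have hli : LinearIndependent ℝ x := by
    rw [linearIndependent_iff']
    intro s g hg t ht
    have h2 := congrArg (fun v : Fin n → ℝ => ∑ i, v i * x t i) hg
    simp only [Finset.sum_apply, Pi.smul_apply, smul_eq_mul, Pi.zero_apply,
      Finset.sum_mul] at h2
    rw [Finset.sum_comm] at h2
    have h3 : ∀ k ∈ s, ∑ i, g k * x k i * x t i = if k = t then g t else 0 := by
      intro k _
      rw [show (∑ i, g k * x k i * x t i) = g k * ∑ i, x k i * x t i by
        rw [Finset.mul_sum]; exact Finset.sum_congr rfl fun i _ => by ring]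
      rw [hx k t]
      by_cases h : k = t
      · subst h; simp
      · simp [h]
    rw [Finset.sum_congr rfl h3, Finset.sum_ite_eq' s t (fun _ => g t), if_pos ht] at h2
    simpa using h2
  -- Dimension count
  have h1 : Submodule.span ℝ (Set.range x) ≤ Submodule.span ℝ (Set.range y) :=
    Submodule.span_le.mpr (Set.range_subset_iff.mpr hspan)
  have h2 : Module.finrank ℝ (Submodule.span ℝ (Set.range x)) = p := by
    rw [finrank_span_eq_card hli, Fintype.card_fin]
  have h3 : Module.finrank ℝ (Submodule.span ℝ (Set.range y)) ≤ q := by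
    calc Module.finrank ℝ (Submodule.span ℝ (Set.range y))
        ≤ (Set.range y).toFinset.card := finrank_span_le_card _
      _ ≤ q := by
          rw [Set.toFinset_range]
          exact (Finset.card_image_le).trans (by simp)
  have := (h2 ▸ Submodule.finrank_mono h1).trans h3
  omega
end

section
/- Let m ≥ 2, let x₁,…,x_p ∈ ℝⁿ be orthonormal, let λ₁,…,λ_p be nonzero reals, and let A = Σ_{k=1}^p λ_k x_k^m. Then A cannot be written as a sum of fewer than p general rank-one tensors: for every q < p there do not exist vectors u_j^{(1)},…,u_j^{(m)} ∈ ℝⁿ (j = 1,…,q) with a_{i₁⋯i_m} = Σ_{j=1}^q (u_j^{(1)})_{i₁}⋯(u_j^{(m)})_{i_m} for all indices. (Hence the tensor rank of A equals p.) -/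
/-- Let `m ≥ 2`, let `x₁, …, x_p ∈ ℝⁿ` be orthonormal, let `λ₁, …, λ_p` be
nonzero reals, and let `A = ∑_{k=1}^p λ_k x_k^m`.  Then `A` cannot be written as a sum of
fewer than `p` general rank-one tensors. -/
theorem tensor_rank_eq_p {m n p : ℕ} (hm : 2 ≤ m)
    (x : Fin p → Fin n → ℝ)
    (hx : ∀ j k, (∑ i, x j i * x k i) = if j = k then (1 : ℝ) else 0)
    (lam : Fin p → ℝ) (hlam : ∀ k, lam k ≠ 0)
    (A : (Fin m → Fin n) → ℝ)
    (hA : A = fun i => ∑ k, lam k * ∏ l, x k (i l)) :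
    ∀ q : ℕ, q < p →
      ¬ ∃ u : Fin q → Fin m → Fin n → ℝ,
          ∀ i : Fin m → Fin n, A i = ∑ j, ∏ l, u j l (i l) := by
  intro q hq h
  obtain ⟨u, hu⟩ := h
  obtain ⟨m', rfl⟩ : ∃ m', m = m' + 2 := ⟨m - 2, by omega⟩
  -- factorization lemma for sums over function types
  have fact : ∀ (M : ℕ) (a g : Fin M → Fin n → ℝ),
      (∑ i : Fin M → Fin n, (∏ l, a l (i l)) * (∏ l, g l (i l)))
        = ∏ l, ∑ e, a l e * g l e := by
    intro M a g
    rw [Fintype.prod_sum]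
    exact Finset.sum_congr rfl fun i _ => (Finset.prod_mul_distrib).symm
  set v : Fin q → Fin n → ℝ := fun j => u j 0 with hv
  -- the key contraction identity
  have key : ∀ k, x k ∈ Submodule.span ℝ (Set.range v) := by
    intro k
    have hxk : x k = ∑ j,
        ((∏ l : Fin (m' + 1), ∑ e, u j l.succ e * x k e) / lam k) • v j := by
      funext e0
      set w : Fin n → ℝ := fun e => if e = e0 then 1 else 0 with hw
      set g : Fin (m' + 2) → Fin n → ℝ := Fin.cons w (fun _ => x k) with hg
      have hC1 : (∑ i : Fin (m' + 2) → Fin n, A i * ∏ l, g l (i l))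
          = lam k * x k e0 := by
        rw [hA]
        simp only [Finset.sum_mul]
        rw [Finset.sum_comm]
        have : ∀ k' : Fin p,
            (∑ i : Fin (m' + 2) → Fin n,
              lam k' * (∏ l, x k' (i l)) * ∏ l, g l (i l))
              = lam k' * ∏ l, ∑ e, x k' e * g l e := by
          intro k'
          rw [← fact (m' + 2) (fun _ => x k') g, Finset.mul_sum]
          exact Finset.sum_congr rfl fun i _ => by ring
        rw [Finset.sum_congr rfl fun k' _ => this k']
        have hprod : ∀ k' : Fin p,
            (∏ l : Fin (m' + 2), ∑ e, x k' e * g l e)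
              = x k' e0 * (if k' = k then (1:ℝ) else 0) := by
          intro k'
          rw [Fin.prod_univ_succ]
          congr 1
          · simp [hg, hw, Finset.sum_ite_eq', mul_comm]
          · have : ∀ l : Fin (m' + 1),
                (∑ e, x k' e * g l.succ e) = if k' = k then (1:ℝ) else 0 := by
              intro l; simp [hg, hx k' k]
            rw [Finset.prod_congr rfl fun l _ => this l, Finset.prod_const]
            by_cases hk : k' = k <;> simp [hk]
        rw [Finset.sum_congr rfl fun k' _ => by rw [hprod k']]
        rw [Finset.sum_congr rfl (fun k' _ => by
          rw [mul_ite, mul_one, mul_zero, mul_ite, mul_zero] : ∀ k' ∈ Finset.univ,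
            lam k' * (x k' e0 * (if k' = k then (1:ℝ) else 0))
              = if k' = k then lam k' * x k' e0 else 0)]
        simp
      have hC2 : (∑ i : Fin (m' + 2) → Fin n, A i * ∏ l, g l (i l))
          = ∑ j, (∏ l : Fin (m' + 1), ∑ e, u j l.succ e * x k e) * v j e0 := by
        have : ∀ i : Fin (m' + 2) → Fin n, A i = ∑ j, ∏ l, u j l (i l) := hu
        simp only [this, Finset.sum_mul]
        rw [Finset.sum_comm]
        refine Finset.sum_congr rfl fun j _ => ?_
        rw [fact (m' + 2) (u j) g, Fin.prod_univ_succ]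
        have h0 : (∑ e, u j 0 e * g 0 e) = v j e0 := by
          simp [hg, hw, Finset.sum_ite_eq', hv]
        have hs : ∀ l : Fin (m' + 1),
            (∑ e, u j (Fin.succ l) e * g (Fin.succ l) e)
              = ∑ e, u j l.succ e * x k e := by
          intro l; simp [hg]
        rw [h0, Finset.prod_congr rfl fun l _ => hs l, mul_comm]
      have heq := hC1.symm.trans hC2
      have hlk := hlam k
      have hstep : x k e0 =
          (∑ j, (∏ l : Fin (m' + 1), ∑ e, u j l.succ e * x k e) * v j e0) / lam k := by
        rw [← heq, mul_comm, mul_div_assoc, div_self hlk, mul_one]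
      rw [Finset.sum_apply]
      simp only [Pi.smul_apply, smul_eq_mul]
      rw [hstep, Finset.sum_div]
      exact Finset.sum_congr rfl fun j _ => by ring
    rw [hxk]
    exact Submodule.sum_mem _ fun j _ =>
      Submodule.smul_mem _ _ (Submodule.subset_span ⟨j, rfl⟩)
  -- orthonormal families are linearly independent
  have hli : LinearIndependent ℝ x := by
    rw [Fintype.linearIndependent_iff]
    intro c hc k
    have h1 := congrArg (fun y : Fin n → ℝ => ∑ e, y e * x k e) hc
    simp only [Finset.sum_apply, Pi.smul_apply, smul_eq_mul, Pi.zero_apply,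
      Finset.sum_mul, zero_mul, Finset.sum_const_zero] at h1
    rw [Finset.sum_comm] at h1
    have h2 : ∀ k' : Fin p,
        (∑ e, c k' * x k' e * x k e) = if k' = k then c k' else 0 := by
      intro k'
      rw [show (∑ e, c k' * x k' e * x k e) = c k' * ∑ e, x k' e * x k e by
        rw [Finset.mul_sum]; exact Finset.sum_congr rfl fun e _ => by ring,
        hx k' k]
      by_cases hk : k' = k <;> simp [hk]
    rw [Finset.sum_congr rfl fun k' _ => h2 k'] at h1
    simpa using h1
  -- dimension count
  have hle : Submodule.span ℝ (Set.range x) ≤ Submodule.span ℝ (Set.range v) :=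
    Submodule.span_le.2 (by rintro _ ⟨k, rfl⟩; exact key k)
  have h1 : Module.finrank ℝ (Submodule.span ℝ (Set.range x)) = p := by
    simpa using finrank_span_eq_card hli
  have h2 : Module.finrank ℝ (Submodule.span ℝ (Set.range v)) ≤ q := by
    simpa [Set.finrank] using finrank_range_le_card v
  have := (Submodule.finrank_mono hle).trans h2
  omega
end

section
/- Let m ≥ 2 be even, let λ₁,…,λ_p > 0, let x₁,…,x_p ∈ ℝⁿ, and let A = Σ_{k=1}^p λ_k x_k^m. Fix y ∈ ℝⁿ and take the coefficients γ_{i₃⋯i_m} = y_{i₃}⋯y_{i_m}. Then the slice combination C of A with coefficients γ equals Σ_{k=1}^p λ_k ⟨x_k, y⟩^{m−2} x_k x_kᵀ and is positive semidefinite. If moreover x₁,…,x_p are linearly independent and ⟨x_k, y⟩ ≠ 0 for every k, then the matrix rank of C equals p. (Hence for even-order decompositions with positive weights, a positive semidefinite full-rank slice combination always exists.) -/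
open Matrix

/-- Let the order `m + 2 ≥ 2` be even (i.e. `m` is even), let
`λ₁, …, λ_p > 0`, let `x₁, …, x_p ∈ ℝⁿ`, and let `A = ∑_{k=1}^p λ_k x_k^{m+2}`.  Fix
`y ∈ ℝⁿ` and take coefficients `γ_{i₃⋯} = y_{i₃} ⋯`.  Then the slice combination `C` of `A`
with coefficients `γ` equals `∑_{k=1}^p λ_k ⟨x_k, y⟩^m x_k x_kᵀ` and is positive
semidefinite.  If moreover `x₁, …, x_p` are linearly independent and `⟨x_k, y⟩ ≠ 0` for
every `k`, then the matrix rank of `C` equals `p`. -/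
theorem psd_full_rank_slice_exists {m n p : ℕ} (hmeven : Even m)
    (lam : Fin p → ℝ) (hlam : ∀ k, 0 < lam k)
    (x : Fin p → Fin n → ℝ)
    (A : (Fin (m + 2) → Fin n) → ℝ)
    (hA : A = fun i => ∑ k, lam k * ∏ l, x k (i l))
    (y : Fin n → ℝ)
    (C : Matrix (Fin n) (Fin n) ℝ)
    (hC : ∀ i₁ i₂, C i₁ i₂ =
      ∑ rest : Fin m → Fin n, (∏ l, y (rest l)) * A (Fin.cons i₁ (Fin.cons i₂ rest))) :
    C = (∑ k, (lam k * (∑ i, x k i * y i) ^ m) • vecMulVec (x k) (x k)) ∧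
    C.PosSemidef ∧
    (LinearIndependent ℝ x → (∀ k, (∑ i, x k i * y i) ≠ 0) → C.rank = p) := by
  set c : Fin p → ℝ := fun k => lam k * (∑ i, x k i * y i) ^ m with hc
  have hcnn : ∀ k, 0 ≤ c k := fun k =>
    mul_nonneg (hlam k).le (hmeven.pow_nonneg _)
  have key : ∀ i₁ i₂, C i₁ i₂ = ∑ k, c k * (x k i₁ * x k i₂) := by
    intro i₁ i₂
    rw [hC, hA]
    simp only [Finset.mul_sum]
    rw [Finset.sum_comm]
    refine Finset.sum_congr rfl fun k _ => ?_
    have hprod : ∀ rest : Fin m → Fin n,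
        (∏ l, x k ((Fin.cons i₁ (Fin.cons i₂ rest) : Fin (m+2) → Fin n) l)) =
          x k i₁ * (x k i₂ * ∏ l, x k (rest l)) := by
      intro rest
      rw [Fin.prod_univ_succ, Fin.prod_univ_succ]
      simp
    have hpow : (∑ i, x k i * y i) ^ m =
        ∑ rest : Fin m → Fin n, ∏ l, (x k (rest l) * y (rest l)) :=
      Fintype.sum_pow _ m
    simp only [hprod, hc]
    rw [hpow, Finset.mul_sum, Finset.sum_mul]
    refine Finset.sum_congr rfl fun rest _ => ?_
    rw [Finset.prod_mul_distrib]
    ring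
  set B : Matrix (Fin p) (Fin n) ℝ := Matrix.of fun k j => Real.sqrt (c k) * x k j with hB
  have hCB : C = Bᴴ * B := by
    ext i j
    rw [key]
    simp only [Matrix.mul_apply, Matrix.conjTranspose_apply, hB, Matrix.of_apply, star_trivial]
    refine Finset.sum_congr rfl fun k _ => ?_
    have h := Real.mul_self_sqrt (hcnn k)
    calc c k * (x k i * x k j) = (Real.sqrt (c k) * Real.sqrt (c k)) * (x k i * x k j) := by
          rw [h]
      _ = Real.sqrt (c k) * x k i * (Real.sqrt (c k) * x k j) := by ring
  refine ⟨?_, ?_, ?_⟩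
  · ext i j
    rw [key]
    simp [Matrix.sum_apply, vecMulVec_apply, mul_assoc, hc]
  · rw [hCB]; exact posSemidef_conjTranspose_mul_self B
  · intro hli hne
    have hcpos : ∀ k, Real.sqrt (c k) ≠ 0 := by
      intro k
      refine (Real.sqrt_pos.mpr (mul_pos (hlam k) (hmeven.pow_pos (hne k)))).ne'
    have hliB : LinearIndependent ℝ fun k => (B k : Fin n → ℝ) := by
      have : (fun k => (B k : Fin n → ℝ)) =
          fun k => (Units.mk0 _ (hcpos k) : ℝˣ) • x k := by
        funext k; ext j; simp [hB, Pi.smul_apply]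
      rw [this]
      exact hli.units_smul _
    rw [hCB, rank_conjTranspose_mul_self]
    simpa using hliB.rank_matrix
end
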